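/- arXiv:2009.06993 — 2 statements merged into one kernel-verified Lean document; each statement's English description precedes it below -/
import Mathlib

section
/- Let φ: [a,b] → ℝ be a probability density with invertible CDF Φ, and for j ≥ 0, m ∈ {0,...,2^j-1}, define H_{j,m}(x) = ∫_a^x h_{j,m}(Φ(y)) φ(y) dy. Then 0 ≤ H_{j,m}(x) ≤ 2^{-(1+j/2)} for all x ∈ [a,b], and ∫_a^b H_{j,m}(x) dx ≤ 2^{-(1+j/2)} [Φ^{-1}((m+1)/2^j) - Φ^{-1}(m/2^j)]. -/
/-- the Haar function `h_{j,m}` for `j ≥ 0`, `0 ≤ m < 2^j` (extended by `0` outside `[0,1)`). -/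
noncomputable def haar (j m : ℕ) (x : ℝ) : ℝ :=
  if (m : ℝ) / 2 ^ j ≤ x ∧ x < (2 * m + 1) / 2 ^ (j + 1) then (2 : ℝ) ^ ((j : ℝ) / 2)
  else if (2 * m + 1) / 2 ^ (j + 1) ≤ x ∧ x < ((m : ℝ) + 1) / 2 ^ j then -(2 : ℝ) ^ ((j : ℝ) / 2)
  else 0

/-!
Because `Φ` is strictly increasing, `h_{j,m} ∘ Φ` equals `2^{j/2}` on `[c₀, c₁)` and `-2^{j/2}` on
`[c₁, c₂)`, where `c₀ ≤ c₁ ≤ c₂` are the `Φ`-preimages of the nodes `m/2^j`, `(2m+1)/2^{j+1}`,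
`(m+1)/2^j` of `h_{j,m}`, and vanishes elsewhere. Hence `H_{j,m} = 2^{j/2} (Φ-mass of [c₀, c₁ ∧ x]
minus Φ-mass of [c₁, c₂ ∧ x])`, a tent that vanishes outside `[c₀, c₂]`; since both intervals carry
mass `2^{-(j+1)}`, it stays between `0` and `2^{j/2} 2^{-(j+1)} = 2^{-(1+j/2)}`. Bounding the tent by
its maximum on `[c₀, c₂]` gives the bound on the integral.
-/

open MeasureTheory Set intervalIntegral

noncomputable def tent (F : ℝ → ℝ) (c₀ c₁ c₂ x : ℝ) : ℝ :=
  (F (min x c₁) - F (min x c₀)) - (F (min x c₂) - F (min x c₁))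

section Tent

variable {F : ℝ → ℝ} {c₀ c₁ c₂ x : ℝ}

theorem tent_of_le (hx : x ≤ c₀) (h₀₁ : c₀ ≤ c₁) (h₁₂ : c₁ ≤ c₂) : tent F c₀ c₁ c₂ x = 0 := by
  rw [tent, min_eq_left hx, min_eq_left (hx.trans h₀₁), min_eq_left (hx.trans (h₀₁.trans h₁₂)),
    sub_self]

theorem tent_of_ge (hx : c₂ ≤ x) (h₀₁ : c₀ ≤ c₁) (h₁₂ : c₁ ≤ c₂)
    (hinc : F c₁ - F c₀ = F c₂ - F c₁) : tent F c₀ c₁ c₂ x = 0 := by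
  rw [tent, min_eq_right hx, min_eq_right (h₁₂.trans hx), min_eq_right (h₀₁.trans (h₁₂.trans hx)),
    hinc, sub_self]

theorem tent_mem_Icc (hF : MonotoneOn F (Icc c₀ c₂)) (h₀₁ : c₀ ≤ c₁) (h₁₂ : c₁ ≤ c₂)
    (hinc : F c₁ - F c₀ = F c₂ - F c₁) :
    tent F c₀ c₁ c₂ x ∈ Icc 0 (F c₁ - F c₀) := by
  have hc₀ : c₀ ∈ Icc c₀ c₂ := left_mem_Icc.2 (h₀₁.trans h₁₂)
  have hc₁ : c₁ ∈ Icc c₀ c₂ := ⟨h₀₁, h₁₂⟩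
  have hc₂ : c₂ ∈ Icc c₀ c₂ := right_mem_Icc.2 (h₀₁.trans h₁₂)
  rcases le_total x c₁ with hx₁ | hx₁
  · rcases le_total x c₀ with hx₀ | hx₀
    · rw [tent_of_le hx₀ h₀₁ h₁₂]
      exact ⟨le_rfl, sub_nonneg.2 (hF hc₀ hc₁ h₀₁)⟩
    · have hx : x ∈ Icc c₀ c₂ := ⟨hx₀, hx₁.trans h₁₂⟩
      rw [tent, min_eq_left hx₁, min_eq_right hx₀, min_eq_left (hx₁.trans h₁₂)]
      have h₀x := hF hc₀ hx hx₀
      have hx₁' := hF hx hc₁ hx₁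
      constructor <;> linarith
  · have hy : min x c₂ ∈ Icc c₀ c₂ := ⟨le_min (h₀₁.trans hx₁) (h₀₁.trans h₁₂), min_le_right _ _⟩
    rw [tent, min_eq_right hx₁, min_eq_right (h₀₁.trans hx₁)]
    have h₁y := hF hc₁ hy (le_min hx₁ h₁₂)
    have hy₂ := hF hy hc₂ (min_le_right _ _)
    constructor <;> linarith

end Tent

theorem IntervalIntegrable.indicator {μ : Measure ℝ} {φ : ℝ → ℝ} {a b : ℝ} {s : Set ℝ}
    (hφ : IntervalIntegrable φ μ a b) (hs : MeasurableSet s) :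
    IntervalIntegrable (s.indicator φ) μ a b :=
  ⟨hφ.1.indicator hs, hφ.2.indicator hs⟩

section Primitive

variable {μ : Measure ℝ} [NullSingletonClass μ] {φ : ℝ → ℝ} {a c d x : ℝ}

theorem integral_indicator_Iio_eq_integral_min (hd : a ≤ d) (hx : a ≤ x) :
    ∫ y in a..x, (Iio d).indicator φ y ∂μ = ∫ y in a..min x d, φ y ∂μ := by
  rw [integral_congr_ae ((indicator_ae_eq_of_ae_eq_set Iio_ae_eq_Iic).mono fun _ h _ => h)]
  rcases le_total d x with h | h
  · rw [min_eq_right h]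
    exact integral_indicator ⟨hd, h⟩
  · rw [min_eq_left h]
    exact integral_congr fun y hy => indicator_of_mem ((uIcc_of_le hx ▸ hy).2.trans h) φ

theorem integral_indicator_Ico (hφ : IntervalIntegrable φ μ a x) (hc : a ≤ c) (hcd : c ≤ d)
    (hx : a ≤ x) :
    ∫ y in a..x, (Ico c d).indicator φ y ∂μ =
      (∫ y in a..min x d, φ y ∂μ) - ∫ y in a..min x c, φ y ∂μ := by
  have hIco : Ico c d = Iio d \ Iio c := by ext; simp
  simp only [hIco, indicator_sdiff (Iio_subset_Iio hcd), Pi.sub_apply]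
  rw [integral_sub (hφ.indicator measurableSet_Iio) (hφ.indicator measurableSet_Iio),
    integral_indicator_Iio_eq_integral_min (hc.trans hcd) hx,
    integral_indicator_Iio_eq_integral_min hc hx]

theorem integral_indicator_Ico_sub_indicator_Ico_eq_tent {c₀ c₁ c₂ : ℝ}
    (hφ : IntervalIntegrable φ μ a x) (h₀ : a ≤ c₀) (h₀₁ : c₀ ≤ c₁) (h₁₂ : c₁ ≤ c₂) (hx : a ≤ x) :
    ∫ y in a..x, ((Ico c₀ c₁).indicator φ y - (Ico c₁ c₂).indicator φ y) ∂μ =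
      tent (fun z => ∫ y in a..z, φ y ∂μ) c₀ c₁ c₂ x := by
  rw [integral_sub (hφ.indicator measurableSet_Ico) (hφ.indicator measurableSet_Ico),
    integral_indicator_Ico hφ h₀ h₀₁ hx,
    integral_indicator_Ico hφ (h₀.trans h₀₁) h₁₂ hx, tent]

end Primitive

theorem eqOn_haar_comp_mul {f φ : ℝ → ℝ} {s : Set ℝ} (hf : StrictMonoOn f s) {j m : ℕ}
    {c₀ c₁ c₂ : ℝ} (hc₀ : c₀ ∈ s) (hc₁ : c₁ ∈ s) (hc₂ : c₂ ∈ s) (h₀ : f c₀ = m / 2 ^ j)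
    (h₁ : f c₁ = (2 * m + 1) / 2 ^ (j + 1)) (h₂ : f c₂ = (m + 1) / 2 ^ j) :
    EqOn (fun y => haar j m (f y) * φ y)
      (fun y => 2 ^ ((j : ℝ) / 2) * ((Ico c₀ c₁).indicator φ y - (Ico c₁ c₂).indicator φ y)) s := by
  intro y hy
  have hmem : ∀ {c d}, c ∈ s → d ∈ s → (f c ≤ f y ∧ f y < f d ↔ y ∈ Ico c d) :=
    fun hc hd => and_congr (hf.le_iff_le hc hy) (hf.lt_iff_lt hy hd)
  simp only [haar, ← h₀, ← h₁, ← h₂, hmem hc₀ hc₁, hmem hc₁ hc₂]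
  by_cases h : y ∈ Ico c₀ c₁
  · have h' : y ∉ Ico c₁ c₂ := fun h' => (h.2.trans_le h'.1).false
    simp [h, h']
  · by_cases h' : y ∈ Ico c₁ c₂ <;> simp [h, h']

theorem integral_le_mul_sub_of_eqOn_zero {f : ℝ → ℝ} {a b c d M : ℝ} (hac : a ≤ c) (hcd : c ≤ d)
    (hdb : d ≤ b) (hf : IntervalIntegrable f volume a b) (hfc : EqOn f 0 (Icc a c))
    (hfd : EqOn f 0 (Icc d b)) (hM : ∀ x ∈ Icc c d, f x ≤ M) :
    ∫ x in a..b, f x ≤ M * (d - c) := by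
  have hsub : ∀ {u v}, u ∈ Icc a b → v ∈ Icc a b → IntervalIntegrable f volume u v :=
    fun hu hv => hf.mono_set (uIcc_subset_uIcc (Icc_subset_uIcc hu) (Icc_subset_uIcc hv))
  have ha : a ∈ Icc a b := ⟨le_rfl, hac.trans (hcd.trans hdb)⟩
  have hb : b ∈ Icc a b := ⟨ha.2, le_rfl⟩
  have hc : c ∈ Icc a b := ⟨hac, hcd.trans hdb⟩
  have hd : d ∈ Icc a b := ⟨hac.trans hcd, hdb⟩
  have hfc' : EqOn f 0 (uIcc a c) := by rwa [uIcc_of_le hac]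
  have hfd' : EqOn f 0 (uIcc d b) := by rwa [uIcc_of_le hdb]
  have hmid := integral_mono_on hcd (hsub hc hd) intervalIntegrable_const hM
  rw [← integral_add_adjacent_intervals (hsub ha hc) (hsub hc hb),
    ← integral_add_adjacent_intervals (hsub hc hd) (hsub hd hb), integral_congr hfc',
    integral_congr hfd']
  simp only [Pi.zero_apply, intervalIntegral.integral_zero, intervalIntegral.integral_const,
    smul_eq_mul] at hmid ⊢
  linarith

theorem haar_node_sub_left (j m : ℕ) :
    (2 * (m : ℝ) + 1) / 2 ^ (j + 1) - m / 2 ^ j = ((2 : ℝ) ^ (j + 1))⁻¹ := by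
  rw [pow_succ]
  field_simp
  ring

theorem haar_node_sub_right (j m : ℕ) :
    ((m : ℝ) + 1) / 2 ^ j - (2 * m + 1) / 2 ^ (j + 1) = ((2 : ℝ) ^ (j + 1))⁻¹ := by
  rw [pow_succ]
  field_simp
  ring

theorem haar_nodes_mem_Icc {j m : ℕ} (hm : m < 2 ^ j) :
    (m : ℝ) / 2 ^ j ∈ Icc (0 : ℝ) 1 ∧ (2 * (m : ℝ) + 1) / 2 ^ (j + 1) ∈ Icc (0 : ℝ) 1 ∧
      ((m : ℝ) + 1) / 2 ^ j ∈ Icc (0 : ℝ) 1 := by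
  have h₂ : ((m : ℝ) + 1) / 2 ^ j ≤ 1 := (div_le_one (by positivity)).2 (by exact_mod_cast hm)
  have hδ : (0 : ℝ) < ((2 : ℝ) ^ (j + 1))⁻¹ := by positivity
  have h₀₁ := haar_node_sub_left j m
  have h₁₂ := haar_node_sub_right j m
  exact ⟨⟨by positivity, by linarith⟩, ⟨by positivity, by linarith⟩, ⟨by positivity, h₂⟩⟩

theorem rpow_half_mul_inv_two_pow_succ (j : ℕ) :
    (2 : ℝ) ^ ((j : ℝ) / 2) * ((2 : ℝ) ^ (j + 1))⁻¹ = 2 ^ (-(1 + (j : ℝ) / 2)) := by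
  rw [← Real.rpow_natCast, ← Real.rpow_neg zero_le_two, ← Real.rpow_add two_pos]
  push_cast
  ring_nf

structure HaarNodes (Φ : ℝ → ℝ) (a b : ℝ) (j m : ℕ) (c₀ c₁ c₂ : ℝ) : Prop where
  mem₀ : c₀ ∈ Icc a b
  mem₁ : c₁ ∈ Icc a b
  mem₂ : c₂ ∈ Icc a b
  eq₀ : Φ c₀ = m / 2 ^ j
  eq₁ : Φ c₁ = (2 * m + 1) / 2 ^ (j + 1)
  eq₂ : Φ c₂ = (m + 1) / 2 ^ j

namespace HaarNodes

variable {Φ φ : ℝ → ℝ} {a b : ℝ} {j m : ℕ} {c₀ c₁ c₂ : ℝ}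

theorem of_rightInvOn {Φinv : ℝ → ℝ} (hinv : ∀ y ∈ Icc (0 : ℝ) 1, Φ (Φinv y) = y)
    (hmaps : MapsTo Φinv (Icc 0 1) (Icc a b)) (hm : m < 2 ^ j) :
    HaarNodes Φ a b j m (Φinv (m / 2 ^ j)) (Φinv ((2 * m + 1) / 2 ^ (j + 1)))
      (Φinv ((m + 1) / 2 ^ j)) :=
  have ⟨h₀, h₁, h₂⟩ := haar_nodes_mem_Icc hm
  ⟨hmaps h₀, hmaps h₁, hmaps h₂, hinv _ h₀, hinv _ h₁, hinv _ h₂⟩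

theorem sub_eq_left (h : HaarNodes Φ a b j m c₀ c₁ c₂) :
    Φ c₁ - Φ c₀ = ((2 : ℝ) ^ (j + 1))⁻¹ := by
  rw [h.eq₀, h.eq₁, haar_node_sub_left]

theorem sub_eq_right (h : HaarNodes Φ a b j m c₀ c₁ c₂) :
    Φ c₂ - Φ c₁ = ((2 : ℝ) ^ (j + 1))⁻¹ := by
  rw [h.eq₁, h.eq₂, haar_node_sub_right]

theorem le₀₁ (h : HaarNodes Φ a b j m c₀ c₁ c₂) (hΦ : StrictMonoOn Φ (Icc a b)) : c₀ ≤ c₁ :=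
  (hΦ.le_iff_le h.mem₀ h.mem₁).1 (sub_nonneg.1 (h.sub_eq_left ▸ by positivity))

theorem le₁₂ (h : HaarNodes Φ a b j m c₀ c₁ c₂) (hΦ : StrictMonoOn Φ (Icc a b)) : c₁ ≤ c₂ :=
  (hΦ.le_iff_le h.mem₁ h.mem₂).1 (sub_nonneg.1 (h.sub_eq_right ▸ by positivity))

theorem eqOn_haar_comp_mul (h : HaarNodes Φ a b j m c₀ c₁ c₂) (hΦ : StrictMonoOn Φ (Icc a b)) :
    EqOn (fun y => haar j m (Φ y) * φ y)
      (fun y => 2 ^ ((j : ℝ) / 2) * ((Ico c₀ c₁).indicator φ y - (Ico c₁ c₂).indicator φ y))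
      (Icc a b) :=
  _root_.eqOn_haar_comp_mul hΦ h.mem₀ h.mem₁ h.mem₂ h.eq₀ h.eq₁ h.eq₂

theorem integrableOn_haar_comp_mul (h : HaarNodes Φ a b j m c₀ c₁ c₂)
    (hΦ : StrictMonoOn Φ (Icc a b)) (hφ : IntegrableOn φ (Icc a b)) :
    IntegrableOn (fun y => haar j m (Φ y) * φ y) (Icc a b) :=
  IntegrableOn.congr_fun
    (((hφ.indicator measurableSet_Ico).sub (hφ.indicator measurableSet_Ico)).const_mul _)
    (h.eqOn_haar_comp_mul hΦ).symm measurableSet_Icc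

theorem integral_haar_comp_mul_eq_tent (h : HaarNodes Φ a b j m c₀ c₁ c₂)
    (hΦ : StrictMonoOn Φ (Icc a b)) (hφ : IntegrableOn φ (Icc a b))
    (hΦφ : ∀ x, Φ x = ∫ y in a..x, φ y) {x : ℝ} (hx : x ∈ Icc a b) :
    ∫ y in a..x, haar j m (Φ y) * φ y = 2 ^ ((j : ℝ) / 2) * tent Φ c₀ c₁ c₂ x := by
  have hsub : uIcc a x ⊆ Icc a b := uIcc_of_le hx.1 ▸ Icc_subset_Icc_right hx.2
  rw [integral_congr ((h.eqOn_haar_comp_mul hΦ).mono hsub), intervalIntegral.integral_const_mul,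
    integral_indicator_Ico_sub_indicator_Ico_eq_tent (hφ.mono_set hsub).intervalIntegrable
      h.mem₀.1 (h.le₀₁ hΦ) (h.le₁₂ hΦ) hx.1]
  simp only [tent, hΦφ]

theorem integral_haar_comp_mul_mem_Icc (h : HaarNodes Φ a b j m c₀ c₁ c₂)
    (hΦ : StrictMonoOn Φ (Icc a b)) (hφ : IntegrableOn φ (Icc a b))
    (hΦφ : ∀ x, Φ x = ∫ y in a..x, φ y) {x : ℝ} (hx : x ∈ Icc a b) :
    ∫ y in a..x, haar j m (Φ y) * φ y ∈ Icc 0 ((2 : ℝ) ^ (-(1 + (j : ℝ) / 2))) := by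
  obtain ⟨h0, h1⟩ := tent_mem_Icc (x := x) (hΦ.monotoneOn.mono (Icc_subset_Icc h.mem₀.1 h.mem₂.2))
    (h.le₀₁ hΦ) (h.le₁₂ hΦ) (h.sub_eq_left.trans h.sub_eq_right.symm)
  rw [h.integral_haar_comp_mul_eq_tent hΦ hφ hΦφ hx, ← rpow_half_mul_inv_two_pow_succ,
    ← h.sub_eq_left]
  exact ⟨by positivity, mul_le_mul_of_nonneg_left h1 (by positivity)⟩

theorem eqOn_integral_haar_comp_mul_zero_left (h : HaarNodes Φ a b j m c₀ c₁ c₂)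
    (hΦ : StrictMonoOn Φ (Icc a b)) (hφ : IntegrableOn φ (Icc a b))
    (hΦφ : ∀ x, Φ x = ∫ y in a..x, φ y) :
    EqOn (fun x => ∫ y in a..x, haar j m (Φ y) * φ y) 0 (Icc a c₀) := fun x hx =>
  (h.integral_haar_comp_mul_eq_tent hΦ hφ hΦφ ⟨hx.1, hx.2.trans h.mem₀.2⟩).trans <| by
    rw [tent_of_le hx.2 (h.le₀₁ hΦ) (h.le₁₂ hΦ), mul_zero, Pi.zero_apply]

theorem eqOn_integral_haar_comp_mul_zero_right (h : HaarNodes Φ a b j m c₀ c₁ c₂)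
    (hΦ : StrictMonoOn Φ (Icc a b)) (hφ : IntegrableOn φ (Icc a b))
    (hΦφ : ∀ x, Φ x = ∫ y in a..x, φ y) :
    EqOn (fun x => ∫ y in a..x, haar j m (Φ y) * φ y) 0 (Icc c₂ b) := fun x hx =>
  (h.integral_haar_comp_mul_eq_tent hΦ hφ hΦφ ⟨h.mem₂.1.trans hx.1, hx.2⟩).trans <| by
    rw [tent_of_ge hx.1 (h.le₀₁ hΦ) (h.le₁₂ hΦ) (h.sub_eq_left.trans h.sub_eq_right.symm),
      mul_zero, Pi.zero_apply]

end HaarNodes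

theorem Hjm_bounds_general (a b : ℝ) (hab : a < b) (φ Φ Φinv : ℝ → ℝ)
    (hφint : MeasureTheory.IntegrableOn φ (Set.Icc a b))
    (hΦ : ∀ x, Φ x = ∫ y in a..x, φ y)
    (hΦmono : StrictMonoOn Φ (Set.Icc a b))
    (hinv₂ : ∀ y ∈ Set.Icc (0 : ℝ) 1, Φ (Φinv y) = y)
    (hinvmaps : Set.MapsTo Φinv (Set.Icc (0 : ℝ) 1) (Set.Icc a b))
    (j m : ℕ) (hm : m < 2 ^ j) :
    (∀ x ∈ Set.Icc a b,
        0 ≤ ∫ y in a..x, haar j m (Φ y) * φ y ∧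
          (∫ y in a..x, haar j m (Φ y) * φ y) ≤ (2 : ℝ) ^ (-(1 + (j : ℝ) / 2))) ∧
      (∫ x in a..b, ∫ y in a..x, haar j m (Φ y) * φ y) ≤
        (2 : ℝ) ^ (-(1 + (j : ℝ) / 2)) *
          (Φinv (((m : ℝ) + 1) / 2 ^ j) - Φinv ((m : ℝ) / 2 ^ j)) := by
  have hc := HaarNodes.of_rightInvOn hinv₂ hinvmaps hm
  have hH := fun x (hx : x ∈ Icc a b) => hc.integral_haar_comp_mul_mem_Icc hΦmono hφint hΦ hx
  have hHint : IntervalIntegrable (fun x => ∫ y in a..x, haar j m (Φ y) * φ y) volume a b :=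
    (continuousOn_primitive_interval
      (uIcc_of_le hab.le ▸ hc.integrableOn_haar_comp_mul hΦmono hφint)).intervalIntegrable
  exact ⟨hH, integral_le_mul_sub_of_eqOn_zero hc.mem₀.1 ((hc.le₀₁ hΦmono).trans (hc.le₁₂ hΦmono))
    hc.mem₂.2 hHint (hc.eqOn_integral_haar_comp_mul_zero_left hΦmono hφint hΦ)
    (hc.eqOn_integral_haar_comp_mul_zero_right hΦmono hφint hΦ)
    fun x hx => (hH x ⟨hc.mem₀.1.trans hx.1, hx.2.trans hc.mem₂.2⟩).2⟩

theorem Hjm_bounds (a b : ℝ) (hab : a < b) (φ Φ Φinv : ℝ → ℝ)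
    (hφ : ∀ x ∈ Set.Icc a b, 0 ≤ φ x) (hφint : MeasureTheory.IntegrableOn φ (Set.Icc a b))
    (hφnorm : ∫ y in a..b, φ y = 1)
    (hΦ : ∀ x, Φ x = ∫ y in a..x, φ y)
    (hΦmono : StrictMonoOn Φ (Set.Icc a b))
    (hinv₁ : ∀ x ∈ Set.Icc a b, Φinv (Φ x) = x)
    (hinv₂ : ∀ y ∈ Set.Icc (0 : ℝ) 1, Φ (Φinv y) = y)
    (hinvmaps : Set.MapsTo Φinv (Set.Icc (0 : ℝ) 1) (Set.Icc a b))
    (j m : ℕ) (hm : m < 2 ^ j) :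
    (∀ x ∈ Set.Icc a b,
        0 ≤ ∫ y in a..x, haar j m (Φ y) * φ y ∧
          (∫ y in a..x, haar j m (Φ y) * φ y) ≤ (2 : ℝ) ^ (-(1 + (j : ℝ) / 2))) ∧
      (∫ x in a..b, ∫ y in a..x, haar j m (Φ y) * φ y) ≤
        (2 : ℝ) ^ (-(1 + (j : ℝ) / 2)) *
          (Φinv (((m : ℝ) + 1) / 2 ^ j) - Φinv ((m : ℝ) / 2 ^ j)) :=
  Hjm_bounds_general a b hab φ Φ Φinv hφint hΦ hΦmono hinv₂ hinvmaps j m hm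
end

section
/- Let F: [a,b] → ℝ be continuously differentiable, φ a probability density on [a,b] with invertible CDF Φ, and for j ≥ 0, m ∈ {0,...,2^j-1}, let F̂(j,m) = ∫_a^b F(x) h_{j,m}(Φ(x)) φ(x) dx be the φ-weighted Haar coefficient. Then |F̂(j,m)| ≤ 2^{-j/2} · λ_{j,m} · sup_{x ∈ [a,b]} |F'(x)|, where λ_{j,m} = (1/2)[Φ^{-1}((m+1)/2^j) - Φ^{-1}(m/2^j)]. -/
open MeasureTheory Set intervalIntegral

lemma haar_plus {j m : ℕ} {t : ℝ} (h1 : (m:ℝ)/2^j ≤ t) (h2 : t < (2*(m:ℝ)+1)/2^(j+1)) :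
    haar j m t = (2:ℝ)^((j:ℝ)/2) := by
  unfold haar; rw [if_pos ⟨h1, h2⟩]

lemma haar_minus {j m : ℕ} {t : ℝ} (h1 : (2*(m:ℝ)+1)/2^(j+1) ≤ t) (h2 : t < ((m:ℝ)+1)/2^j) :
    haar j m t = -(2:ℝ)^((j:ℝ)/2) := by
  unfold haar
  rw [if_neg, if_pos ⟨h1, h2⟩]
  rintro ⟨-, h⟩; exact absurd h (not_lt.2 h1)

lemma haar_zero_left {j m : ℕ} {t : ℝ} (h : t < (m:ℝ)/2^j) : haar j m t = 0 := by
  have hpq : (m:ℝ)/2^j ≤ (2*(m:ℝ)+1)/2^(j+1) := by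
    rw [pow_succ, div_le_div_iff₀ (by positivity) (by positivity)]
    nlinarith [pow_pos (show (0:ℝ) < 2 by norm_num) j]
  unfold haar
  rw [if_neg, if_neg]
  · rintro ⟨h1, -⟩; exact absurd (h.trans_le hpq) (not_lt.2 h1)
  · rintro ⟨h1, -⟩; exact absurd h (not_lt.2 h1)

lemma haar_zero_right {j m : ℕ} {t : ℝ} (h : ((m:ℝ)+1)/2^j ≤ t) : haar j m t = 0 := by
  have hqr : (2*(m:ℝ)+1)/2^(j+1) ≤ ((m:ℝ)+1)/2^j := by
    rw [pow_succ, div_le_div_iff₀ (by positivity) (by positivity)]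
    nlinarith [pow_pos (show (0:ℝ) < 2 by norm_num) j]
  unfold haar
  rw [if_neg, if_neg]
  · rintro ⟨-, h2⟩; exact absurd h (not_le.2 h2)
  · rintro ⟨-, h2⟩; exact absurd h (not_le.2 (h2.trans_le hqr))

theorem haar_coeff_bound (a b : ℝ) (hab : a < b) (φ Φ Φinv : ℝ → ℝ)
    (hφ : ∀ x ∈ Set.Icc a b, 0 ≤ φ x) (hφint : MeasureTheory.IntegrableOn φ (Set.Icc a b))
    (hφnorm : ∫ y in a..b, φ y = 1)
    (hΦ : ∀ x, Φ x = ∫ y in a..x, φ y)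
    (hΦmono : StrictMonoOn Φ (Set.Icc a b))
    (hinv₁ : ∀ x ∈ Set.Icc a b, Φinv (Φ x) = x)
    (hinv₂ : ∀ y ∈ Set.Icc (0 : ℝ) 1, Φ (Φinv y) = y)
    (hinvmaps : Set.MapsTo Φinv (Set.Icc (0 : ℝ) 1) (Set.Icc a b))
    (F F' : ℝ → ℝ)
    (hderiv : ∀ x ∈ Set.Icc a b, HasDerivWithinAt F (F' x) (Set.Icc a b) x)
    (hF'cont : ContinuousOn F' (Set.Icc a b))
    (j m : ℕ) (hm : m < 2 ^ j) :
    |∫ x in a..b, F x * haar j m (Φ x) * φ x| ≤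
      (2 : ℝ) ^ (-(j : ℝ) / 2) *
        ((1 / 2) * (Φinv (((m : ℝ) + 1) / 2 ^ j) - Φinv ((m : ℝ) / 2 ^ j))) *
          sSup ((fun x => |F' x|) '' Set.Icc a b) := by
  have hab' : a ≤ b := hab.le
  have haab : a ∈ Icc a b := ⟨le_rfl, hab'⟩
  have h2j : (0:ℝ) < 2 ^ j := by positivity
  have h2j1 : (0:ℝ) < 2 ^ (j+1) := by positivity
  set s : ℝ := (2:ℝ) ^ ((j:ℝ)/2) with hsdef
  have hs0 : 0 ≤ s := Real.rpow_nonneg (by norm_num) _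
  set c : ℝ := 1 / 2 ^ (j+1) with hcdef
  have hc0 : 0 < c := by positivity
  -- dyadic points
  have hm' : (m:ℝ) + 1 ≤ 2 ^ j := by exact_mod_cast Nat.succ_le_of_lt hm
  have hqp : (2*(m:ℝ)+1)/2^(j+1) - (m:ℝ)/2^j = c := by
    rw [hcdef, pow_succ]; field_simp; ring
  have hrq : ((m:ℝ)+1)/2^j - (2*(m:ℝ)+1)/2^(j+1) = c := by
    rw [hcdef, pow_succ]; field_simp; ring
  have hp0 : (0:ℝ) ≤ (m:ℝ)/2^j := by positivity
  have hr1 : ((m:ℝ)+1)/2^j ≤ 1 := by rw [div_le_one h2j]; linarith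
  have hpmem : (m:ℝ)/2^j ∈ Icc (0:ℝ) 1 := ⟨hp0, by linarith⟩
  have hqmem : (2*(m:ℝ)+1)/2^(j+1) ∈ Icc (0:ℝ) 1 := ⟨by positivity, by linarith⟩
  have hrmem : ((m:ℝ)+1)/2^j ∈ Icc (0:ℝ) 1 := ⟨by positivity, hr1⟩
  set X0 : ℝ := Φinv ((m:ℝ)/2^j) with hX0def
  set X1 : ℝ := Φinv ((2*(m:ℝ)+1)/2^(j+1)) with hX1def
  set X2 : ℝ := Φinv (((m:ℝ)+1)/2^j) with hX2def
  have hX0m : X0 ∈ Icc a b := hinvmaps hpmem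
  have hX1m : X1 ∈ Icc a b := hinvmaps hqmem
  have hX2m : X2 ∈ Icc a b := hinvmaps hrmem
  have hΦX0 : Φ X0 = (m:ℝ)/2^j := hinv₂ _ hpmem
  have hΦX1 : Φ X1 = (2*(m:ℝ)+1)/2^(j+1) := hinv₂ _ hqmem
  have hΦX2 : Φ X2 = ((m:ℝ)+1)/2^j := hinv₂ _ hrmem
  have hX01 : X0 < X1 := (hΦmono.lt_iff_lt hX0m hX1m).mp (by rw [hΦX0, hΦX1]; linarith)
  have hX12 : X1 < X2 := (hΦmono.lt_iff_lt hX1m hX2m).mp (by rw [hΦX1, hΦX2]; linarith)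
  -- basic integrability
  have hFcont : ContinuousOn F (Icc a b) := fun x hx => (hderiv x hx).continuousWithinAt
  have hfint : IntegrableOn (fun x => F x * φ x) (Icc a b) :=
    IntegrableOn.continuousOn_mul hFcont hφint isCompact_Icc
  have hf2int : IntegrableOn (fun x => (F x - F X1) * φ x) (Icc a b) :=
    IntegrableOn.continuousOn_mul (hFcont.sub continuousOn_const) hφint isCompact_Icc
  have hII : ∀ (g : ℝ → ℝ), IntegrableOn g (Icc a b) → ∀ {u v : ℝ}, u ∈ Icc a b → v ∈ Icc a b →
      IntervalIntegrable g MeasureTheory.volume u v := by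
    intro g hg u v hu hv
    rw [intervalIntegrable_iff]
    refine hg.mono_set ?_
    refine (Set.Ioc_subset_Icc_self).trans ?_
    rw [← Set.uIcc_of_le hab']
    exact Set.uIcc_subset_uIcc (by rwa [Set.uIcc_of_le hab']) (by rwa [Set.uIcc_of_le hab'])

  -- pointwise identity on [a,b]
  set f1 : ℝ → ℝ := fun y => s * (F y * φ y) with hf1def
  have hpt : Set.EqOn (fun x => F x * haar j m (Φ x) * φ x)
      (fun x => (Ico X0 X1).indicator f1 x - (Ico X1 X2).indicator f1 x) (Icc a b) := by
    intro x hx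
    simp only
    rcases lt_or_ge x X0 with h0 | h0
    · have hΦx : Φ x < (m:ℝ)/2^j := by rw [← hΦX0]; exact hΦmono hx hX0m h0
      rw [haar_zero_left hΦx, Set.indicator_of_notMem (by simp [Set.mem_Ico]; intro h; linarith),
        Set.indicator_of_notMem (by simp [Set.mem_Ico]; intro h; linarith)]
      ring
    · rcases lt_or_ge x X1 with h1 | h1
      · have hl : (m:ℝ)/2^j ≤ Φ x := by rw [← hΦX0]; exact (hΦmono.le_iff_le hX0m hx).mpr h0
        have hu : Φ x < (2*(m:ℝ)+1)/2^(j+1) := by rw [← hΦX1]; exact hΦmono hx hX1m h1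
        rw [haar_plus hl hu, Set.indicator_of_mem (by exact ⟨h0, h1⟩),
          Set.indicator_of_notMem (by simp [Set.mem_Ico]; intro h; linarith)]
        rw [hf1def]; ring
      · rcases lt_or_ge x X2 with h2 | h2
        · have hl : (2*(m:ℝ)+1)/2^(j+1) ≤ Φ x := by
            rw [← hΦX1]; exact (hΦmono.le_iff_le hX1m hx).mpr h1
          have hu : Φ x < ((m:ℝ)+1)/2^j := by rw [← hΦX2]; exact hΦmono hx hX2m h2
          rw [haar_minus hl hu, Set.indicator_of_notMem (by simp [Set.mem_Ico]; intro h; linarith),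
            Set.indicator_of_mem (by exact ⟨h1, h2⟩)]
          rw [hf1def]; ring
        · have hΦx : ((m:ℝ)+1)/2^j ≤ Φ x := by
            rw [← hΦX2]; exact (hΦmono.le_iff_le hX2m hx).mpr h2
          rw [haar_zero_right hΦx,
            Set.indicator_of_notMem (by simp [Set.mem_Ico]; intro h; linarith),
            Set.indicator_of_notMem (by simp [Set.mem_Ico]; intro h; linarith)]
          ring
  rw [intervalIntegral.integral_congr (by rwa [Set.uIcc_of_le hab'])]
  -- integrability of the indicator pieces
  have hf1int : IntegrableOn f1 (Icc a b) := hfint.const_mul s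
  have hind : ∀ u v : ℝ, u ∈ Icc a b → v ∈ Icc a b → u ≤ v →
      IntervalIntegrable ((Ico u v).indicator f1) MeasureTheory.volume a b := by
    intro u v hu hv huv
    rw [intervalIntegrable_iff_integrableOn_Ioc_of_le hab']
    exact (hf1int.mono_set Set.Ioc_subset_Icc_self).indicator measurableSet_Ico
  rw [intervalIntegral.integral_sub (hind _ _ hX0m hX1m hX01.le) (hind _ _ hX1m hX2m hX12.le)]
  -- indicator integrals are interval integrals
  have hindval : ∀ u v : ℝ, u ∈ Icc a b → v ∈ Icc a b → u ≤ v →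
      ∫ x in a..b, (Ico u v).indicator f1 x = ∫ x in u..v, f1 x := by
    intro u v hu hv huv
    rw [intervalIntegral.integral_of_le hab', MeasureTheory.integral_indicator measurableSet_Ico,
      Measure.restrict_restrict measurableSet_Ico, intervalIntegral.integral_of_le huv]
    apply MeasureTheory.setIntegral_congr_set
    rw [MeasureTheory.ae_eq_set]
    constructor
    · refine measure_mono_null (fun x hx => ?_) (measure_singleton u)
      obtain ⟨⟨⟨hux, hxv⟩, -, -⟩, hnot⟩ := hx
      simp only [Set.mem_Ioc, not_and, not_le] at hnot
      have : x ≤ u := by by_contra hc; push_neg at hc; linarith [hnot hc]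
      simpa using le_antisymm this hux
    · refine measure_mono_null (fun x hx => ?_) (measure_singleton v)
      obtain ⟨⟨hux, hxv⟩, hnot⟩ := hx
      simp only [Set.mem_inter_iff, Set.mem_Ico, Set.mem_Ioc, not_and, not_lt, not_le] at hnot
      have : v ≤ x := by
        by_contra hc; push_neg at hc
        have h1 := hnot ⟨le_of_lt hux, hc⟩
        have : a < x := lt_of_le_of_lt hu.1 hux
        rcases h1 this with h2
        exact absurd (hxv.trans hv.2) (not_le.2 h2)
      simpa using le_antisymm hxv this
  rw [hindval _ _ hX0m hX1m hX01.le, hindval _ _ hX1m hX2m hX12.le, hf1def]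
  rw [intervalIntegral.integral_const_mul, intervalIntegral.integral_const_mul]

  set M : ℝ := sSup ((fun x => |F' x|) '' Set.Icc a b) with hMdef
  have hMbdd : BddAbove ((fun x => |F' x|) '' Set.Icc a b) :=
    (isCompact_Icc.image_of_continuousOn hF'cont.abs).bddAbove
  have hMle : ∀ x ∈ Icc a b, |F' x| ≤ M := fun x hx => le_csSup hMbdd ⟨x, hx, rfl⟩
  have hM0 : 0 ≤ M := le_trans (abs_nonneg _) (hMle a haab)
  have hLip : ∀ x ∈ Icc a b, ∀ y ∈ Icc a b, |F x - F y| ≤ M * |x - y| := by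
    intro x hx y hy
    have := Convex.norm_image_sub_le_of_norm_hasDerivWithin_le hderiv
      (fun z hz => by simpa [Real.norm_eq_abs] using hMle z hz) (convex_Icc a b) hy hx
    simpa [Real.norm_eq_abs] using this
  -- φ-mass of subintervals
  have hmass : ∀ u v : ℝ, u ∈ Icc a b → v ∈ Icc a b → ∫ x in u..v, φ x = Φ v - Φ u := by
    intro u v hu hv
    have := intervalIntegral.integral_interval_sub_left (hII φ hφint haab hv) (hII φ hφint haab hu)
    rw [← this, ← hΦ u, ← hΦ v]
  have hmass1 : ∫ x in X0..X1, φ x = c := by rw [hmass _ _ hX0m hX1m, hΦX1, hΦX0, hqp]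
  have hmass2 : ∫ x in X1..X2, φ x = c := by rw [hmass _ _ hX1m hX2m, hΦX2, hΦX1, hrq]
  -- key bound on each half
  have key : ∀ u v : ℝ, u ∈ Icc a b → v ∈ Icc a b → X1 ∈ Icc u v →
      |(∫ x in u..v, F x * φ x) - F X1 * ∫ x in u..v, φ x| ≤ M * (v - u) * ∫ x in u..v, φ x := by
    intro u v hu hv hXuv
    obtain ⟨huX, hXv⟩ := hXuv
    have huv : u ≤ v := huX.trans hXv
    have h1 : (∫ x in u..v, F x * φ x) - F X1 * ∫ x in u..v, φ x
        = ∫ x in u..v, (F x - F X1) * φ x := by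
      rw [← intervalIntegral.integral_const_mul,
        ← intervalIntegral.integral_sub (hII _ hfint hu hv) ((hII φ hφint hu hv).const_mul _)]
      simp only [sub_mul]
    rw [h1]
    calc |∫ x in u..v, (F x - F X1) * φ x| ≤ ∫ x in u..v, |(F x - F X1) * φ x| :=
          intervalIntegral.abs_integral_le_integral_abs huv
      _ ≤ ∫ x in u..v, (M * (v - u)) * φ x := by
          apply intervalIntegral.integral_mono_on huv ((hII _ hf2int hu hv).abs)
            ((hII φ hφint hu hv).const_mul _)
          intro x hxuv
          have hxab : x ∈ Icc a b := ⟨hu.1.trans hxuv.1, hxuv.2.trans hv.2⟩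
          rw [abs_mul, abs_of_nonneg (hφ x hxab)]
          refine mul_le_mul_of_nonneg_right ?_ (hφ x hxab)
          calc |F x - F X1| ≤ M * |x - X1| := hLip x hxab X1 hX1m
            _ ≤ M * (v - u) := by
                refine mul_le_mul_of_nonneg_left ?_ hM0
                rw [abs_le]
                exact ⟨by linarith [hxuv.1, hxuv.2], by linarith [hxuv.1, hxuv.2]⟩
      _ = M * (v - u) * ∫ x in u..v, φ x := intervalIntegral.integral_const_mul _ _
  have k1 : |(∫ x in X0..X1, F x * φ x) - F X1 * c| ≤ M * (X1 - X0) * c := by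
    have := key X0 X1 hX0m hX1m ⟨hX01.le, le_rfl⟩
    rwa [hmass1] at this
  have k2 : |(∫ x in X1..X2, F x * φ x) - F X1 * c| ≤ M * (X2 - X1) * c := by
    have := key X1 X2 hX1m hX2m ⟨le_rfl, hX12.le⟩
    rwa [hmass2] at this
  have hsc : s * c = (2:ℝ) ^ (-(j:ℝ)/2) * (1/2) := by
    have h1 : ((2:ℝ) ^ (j+1) : ℝ) = (2:ℝ) ^ (((j:ℝ)+1)) := by
      rw [← Real.rpow_natCast (2:ℝ) (j+1)]; push_cast; ring_nf
    rw [hcdef, hsdef, one_div, h1, ← Real.rpow_neg (by norm_num),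
      ← Real.rpow_add (by norm_num : (0:ℝ) < 2),
      show (j:ℝ)/2 + -((j:ℝ)+1) = -(j:ℝ)/2 + (-1) by ring,
      Real.rpow_add (by norm_num : (0:ℝ) < 2), Real.rpow_neg_one]
    norm_num
  have hstep : (s * ∫ x in X0..X1, F x * φ x) - s * ∫ x in X1..X2, F x * φ x =
      s * (((∫ x in X0..X1, F x * φ x) - F X1 * c) - ((∫ x in X1..X2, F x * φ x) - F X1 * c)) := by
    ring
  calc |(s * ∫ x in X0..X1, F x * φ x) - s * ∫ x in X1..X2, F x * φ x|
      = s * |((∫ x in X0..X1, F x * φ x) - F X1 * c) - ((∫ x in X1..X2, F x * φ x) - F X1 * c)| := by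
        rw [hstep, abs_mul, abs_of_nonneg hs0]
    _ ≤ s * (M * (X1 - X0) * c + M * (X2 - X1) * c) := by
        refine mul_le_mul_of_nonneg_left ((abs_sub _ _).trans (add_le_add k1 k2)) hs0
    _ = (s * c) * ((X2 - X0) * M) := by ring
    _ = ((2:ℝ) ^ (-(j:ℝ)/2) * (1/2)) * ((X2 - X0) * M) := by rw [hsc]
    _ = (2:ℝ) ^ (-(j:ℝ)/2) * ((1/2) * (X2 - X0)) * M := by ring
end
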